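/- Let n ≥ 1 and k ≥ 0, and let P^n be a coherent exchangeable lower prevision on ℒ(𝒳^n) with count distribution Q^n(h) := P^n(h∘T^n). For a gamble g on 𝒩^n define ḡ ∈ ℒ(𝒩^{n+k}) by ḡ(μ) := Σ_{m∈𝒩^n} (ν(m)·ν(μ−m)/ν(μ))·g(m), where ν(μ−m) := 0 unless m ≤ μ componentwise, and assume that max_{μ∈𝒩^{n+k}} ḡ(μ) ≥ Q^n(g) for every gamble g on 𝒩^n. Then the point-wise smallest coherent exchangeable lower prevision on ℒ(𝒳^{n+k}) dominating the assessments f̃ ↦ P^n(f) is the one whose count distribution is E(h) := sup{ Q^n(g) : g ∈ ℒ(𝒩^n), ḡ(μ) ≤ h(μ) for all μ ∈ 𝒩^{n+k} }, i.e., it is the lower prevision f ↦ E(MuHy^{n+k}(f|·)) on ℒ(𝒳^{n+k}). -/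

import Mathlib

open Finset Filter Topology

/-- A coherent lower prevision on the gambles over a finite nonempty space `Ω`. -/
def LowerPrevCoherent {Ω : Type*} [Fintype Ω] [Nonempty Ω] (P : (Ω → ℝ) → ℝ) : Prop :=
  (∀ f : Ω → ℝ, sInf (Set.range f) ≤ P f) ∧
  (∀ (f : Ω → ℝ) (l : ℝ), 0 ≤ l → P (fun ω => l * f ω) = l * P f) ∧
  (∀ f g : Ω → ℝ, P f + P g ≤ P (f + g))

/-- A linear prevision on the gambles over a finite nonempty space `Ω`. -/
def LinearPrevision {Ω : Type*} [Fintype Ω] [Nonempty Ω] (P : (Ω → ℝ) → ℝ) : Prop :=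
  (∀ f g : Ω → ℝ, P (f + g) = P f + P g) ∧
  (∀ (l : ℝ) (f : Ω → ℝ), P (fun ω => l * f ω) = l * P f) ∧
  (∀ f : Ω → ℝ, (∀ ω, 0 ≤ f ω) → 0 ≤ P f) ∧
  P (fun _ => 1) = 1

/-- Exchangeability of a lower prevision on gambles on `X^N`:
`P (πf − f) ≥ 0` for every gamble `f` and every permutation `π`. -/
def Exchangeable {X : Type*} {N : ℕ} (P : ((Fin N → X) → ℝ) → ℝ) : Prop :=
  ∀ (f : (Fin N → X) → ℝ) (π : Equiv.Perm (Fin N)),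
    0 ≤ P (fun x => f (fun k => x (π k)) - f x)

/-- The set of count vectors `𝒩^n`. -/
abbrev CVec (X : Type*) [Fintype X] (n : ℕ) : Type _ := {m : X → ℕ // ∑ x, m x = n}

noncomputable instance {X : Type*} [Fintype X] [DecidableEq X] (n : ℕ) : Fintype (CVec X n) := by
  have key : ∀ (m : CVec X n) (x : X), m.1 x < n + 1 := by
    intro m x
    have h1 : m.1 x ≤ ∑ y, m.1 y :=
      Finset.single_le_sum (fun i _ => Nat.zero_le _) (Finset.mem_univ x)
    have h2 := m.2
    omega
  exact Fintype.ofInjective (fun m : CVec X n => fun x => (⟨m.1 x, key m x⟩ : Fin (n+1)))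
    (fun a b hab => Subtype.ext (funext fun x => congrArg Fin.val (congrFun hab x)))

instance {X : Type*} [Fintype X] [DecidableEq X] [Nonempty X] (n : ℕ) :
    Nonempty (CVec X n) :=
  ⟨⟨fun x => if x = Classical.arbitrary X then n else 0, by simp⟩⟩

/-- The counting map `T^n : X^n → 𝒩^n`. -/
def countMap {X : Type*} [Fintype X] [DecidableEq X] (n : ℕ) (z : Fin n → X) : CVec X n :=
  ⟨fun x => (Finset.univ.filter fun k => z k = x).card, by
    have h := Finset.card_eq_sum_card_fiberwise (f := z) (s := Finset.univ) (t := Finset.univ)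
      (fun k _ => Finset.mem_univ (z k))
    simpa using h.symm⟩

/-- `ν(m) = n!/∏ₓ mₓ!` for a count vector `m ∈ 𝒩^n`. -/
def nu {X : Type*} [Fintype X] {n : ℕ} (m : CVec X n) : ℕ :=
  Nat.multinomial Finset.univ m.1

/-- `ν(μ − m)`, which is `0` unless `m ≤ μ` componentwise. -/
def nuSub {X : Type*} [Fintype X] {n k : ℕ} (μ : CVec X (n + k)) (m : CVec X n) : ℕ :=
  if ∀ x, m.1 x ≤ μ.1 x then Nat.multinomial Finset.univ (fun x => μ.1 x - m.1 x) else 0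

/-- The multiple hyper-geometric prevision `MuHy^n(f|m) = (1/ν(m)) ∑_{z∈[m]} f(z)`. -/
noncomputable def MuHy {X : Type*} [Fintype X] [DecidableEq X] {n : ℕ}
    (f : (Fin n → X) → ℝ) (m : CVec X n) : ℝ :=
  (∑ z ∈ Finset.univ.filter fun z : Fin n → X => countMap n z = m, f z) / (nu m : ℝ)

/-- The `X`-simplex `Σ_X`, as a subtype of `X → ℝ`. -/
abbrev SimplexPt (X : Type*) [Fintype X] : Type _ :=
  {θ : X → ℝ // (∀ x, 0 ≤ θ x) ∧ ∑ x, θ x = 1}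

/-- The Bernstein basis polynomial `B_m(θ) = ν(m) ∏ₓ θₓ^{mₓ}`. -/
noncomputable def Bern {X : Type*} [Fintype X] {n : ℕ} (m : CVec X n) (θ : X → ℝ) : ℝ :=
  (nu m : ℝ) * ∏ x, θ x ^ m.1 x

/-- The count multinomial expectation `CoMn^n(g|θ) = ∑_m g(m) B_m(θ)`. -/
noncomputable def CoMn {X : Type*} [Fintype X] [DecidableEq X] {n : ℕ} (g : CVec X n → ℝ) (θ : X → ℝ) : ℝ :=
  ∑ m : CVec X n, g m * Bern m θ

/-- The multinomial expectation `Mn^n(f|θ) = ∑_z f(z) ∏ₓ θₓ^{Tₓ(z)}`. -/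
noncomputable def Mn {X : Type*} [Fintype X] [DecidableEq X] {n : ℕ}
    (f : (Fin n → X) → ℝ) (θ : X → ℝ) : ℝ :=
  ∑ z : Fin n → X, f z * ∏ x, θ x ^ (countMap n z).1 x

/-- `CoMn^n(g|·)` as a function on the simplex. -/
noncomputable def CoMnP {X : Type*} [Fintype X] [DecidableEq X] {n : ℕ} (g : CVec X n → ℝ)
    (θ : SimplexPt X) : ℝ :=
  CoMn g θ.1

/-- `Mn^n(f|·)` as a function on the simplex. -/
noncomputable def MnP {X : Type*} [Fintype X] [DecidableEq X] {n : ℕ}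
    (f : (Fin n → X) → ℝ) (θ : SimplexPt X) : ℝ :=
  Mn f θ.1

/-- Polynomial gambles on the simplex: the set `𝒱(Σ_X)`. -/
def IsPolyGamble {X : Type*} [Fintype X] [DecidableEq X] (p : SimplexPt X → ℝ) : Prop :=
  ∃ n : ℕ, 1 ≤ n ∧ ∃ g : CVec X n → ℝ, p = fun θ => CoMnP g θ

/-- Coherence of a functional on the linear space `𝒱(Σ_X)` of polynomial gambles. -/
def CoherentOnPoly {X : Type*} [Fintype X] [DecidableEq X] (S : (SimplexPt X → ℝ) → ℝ) : Prop :=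
  (∀ p, IsPolyGamble p → sInf (Set.range p) ≤ S p) ∧
  (∀ p, IsPolyGamble p → ∀ l : ℝ, 0 ≤ l → S (fun θ => l * p θ) = l * S p) ∧
  (∀ p q, IsPolyGamble p → IsPolyGamble q → S p + S q ≤ S (p + q))

/-- Cylindrical extension of a gamble on `X^n` to `X^{n+k}`. -/
def cylExt {X : Type*} {n k : ℕ} (f : (Fin n → X) → ℝ) : (Fin (n + k) → X) → ℝ :=
  fun z => f fun i => z (Fin.castLE (Nat.le_add_right n k) i)

/-- Time consistency of a family of lower previsions on the `X^n`. -/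
def PTimeConsistent {X : Type*} (P : ∀ n : ℕ, ((Fin n → X) → ℝ) → ℝ) : Prop :=
  ∀ n : ℕ, 1 ≤ n → ∀ (k : ℕ) (f : (Fin n → X) → ℝ), P n f = P (n + k) (cylExt f)

/-- Time consistency of a family of count lower previsions on the `𝒩^n`. -/
def QTimeConsistent {X : Type*} [Fintype X] [DecidableEq X] (Q : ∀ n : ℕ, (CVec X n → ℝ) → ℝ) : Prop :=
  ∀ n : ℕ, 1 ≤ n → ∀ (k : ℕ) (h : CVec X n → ℝ),
    Q n h = Q (n + k) (fun μ => ∑ m : CVec X n, ((nuSub μ m : ℝ) * (nu m : ℝ) / (nu μ : ℝ)) * h m)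

/-- The relative frequency vector `m/n ∈ Σ_X` of a count vector `m ∈ 𝒩^n`, `n ≥ 1`. -/
noncomputable def freqPt {X : Type*} [Fintype X] {n : ℕ} (hn : 0 < n) (m : CVec X n) :
    SimplexPt X :=
  ⟨fun x => (m.1 x : ℝ) / n,
   fun x => div_nonneg (Nat.cast_nonneg _) (Nat.cast_nonneg _),
   by
    rw [← Finset.sum_div]
    have h : (∑ x, (m.1 x : ℝ)) = (n : ℝ) := by exact_mod_cast m.2
    rw [h]
    exact div_self (Nat.cast_ne_zero.mpr hn.ne')⟩

/-- `ḡ(μ) = ∑_m (ν(m) ν(μ−m) / ν(μ)) g(m)`. -/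
noncomputable def gbar {X : Type*} [Fintype X] [DecidableEq X] {n k : ℕ}
    (g : CVec X n → ℝ) (μ : CVec X (n + k)) : ℝ :=
  ∑ m : CVec X n, ((nu m : ℝ) * (nuSub μ m : ℝ) / (nu μ : ℝ)) * g m

/-!
Writing `z ∘ π` for a permuted sample, `MuHy(f | T z)` is the average of `f (z ∘ π)` over all
permutations `π`. For a coherent exchangeable `P`, both `P (f ∘ π - f)` and `P (f - f ∘ π)` are
nonnegative, so superadditivity gives `P f = P (MuHy(f | T ·))`: such a prevision is determined by
its count distribution. Splitting a sample of size `n + k` into its first `n` and last `k` entries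
shows `MuHy^{n+k}(f̃ | μ) = ḡ(μ)` with `g = MuHy^n(f | ·)`. Hence any exchangeable coherent `E'`
extending `P` satisfies `E'(h ∘ T) ≥ E'(ḡ ∘ T) = E'((g ∘ T)~) ≥ P(g ∘ T) = Q(g)` whenever `ḡ ≤ h`,
so it dominates the supremum `E`. Conversely `E` is coherent because `g ↦ ḡ` is linear and fixes constants, while
the extendability condition `max ḡ ≥ Q(g)` keeps the supremum finite and `E 0 = 0`.
-/

namespace LowerPrevCoherent

variable {Ω : Type*} [Fintype Ω] [Nonempty Ω] {P : (Ω → ℝ) → ℝ}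

theorem map_zero (hP : LowerPrevCoherent P) : P 0 = 0 := by
  simpa [Pi.zero_def] using hP.2.1 0 0 le_rfl

theorem map_smul (hP : LowerPrevCoherent P) {c : ℝ} (hc : 0 ≤ c) (f : Ω → ℝ) :
    P (c • f) = c * P f :=
  hP.2.1 f c hc

theorem const_le (hP : LowerPrevCoherent P) (c : ℝ) : c ≤ P fun _ => c := by
  simpa using hP.1 fun _ => c

theorem nonneg (hP : LowerPrevCoherent P) {f : Ω → ℝ} (hf : 0 ≤ f) : 0 ≤ P f :=
  (le_csInf (Set.range_nonempty f) (Set.forall_mem_range.2 hf)).trans (hP.1 f)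

theorem le_of_nonneg_sub (hP : LowerPrevCoherent P) {f g : Ω → ℝ} (h : 0 ≤ P (g - f)) :
    P f ≤ P g := by
  simpa using (add_le_add le_rfl h).trans (hP.2.2 f (g - f))

theorem mono (hP : LowerPrevCoherent P) {f g : Ω → ℝ} (hfg : f ≤ g) : P f ≤ P g :=
  hP.le_of_nonneg_sub (hP.nonneg (sub_nonneg.2 hfg))

theorem sum_le {ι : Type*} (hP : LowerPrevCoherent P) (s : Finset ι) (f : ι → Ω → ℝ) :
    ∑ i ∈ s, P (f i) ≤ P (∑ i ∈ s, f i) := by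
  classical
  induction s using Finset.induction_on with
  | empty => simp [hP.map_zero]
  | insert a s ha ih =>
    rw [sum_insert ha, sum_insert ha]
    exact (add_le_add le_rfl ih).trans (hP.2.2 _ _)

theorem nonneg_smul_sum {ι : Type*} (hP : LowerPrevCoherent P) {c : ℝ} (hc : 0 ≤ c)
    (s : Finset ι) {f : ι → Ω → ℝ} (hf : ∀ i ∈ s, 0 ≤ P (f i)) :
    0 ≤ P (c • ∑ i ∈ s, f i) := by
  rw [hP.map_smul hc]
  exact mul_nonneg hc ((sum_nonneg hf).trans (hP.sum_le s f))

theorem comp_linearMap {Ω' : Type*} [Fintype Ω'] [Nonempty Ω'] (hP : LowerPrevCoherent P)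
    (M : (Ω' → ℝ) →ₗ[ℝ] Ω → ℝ) (hM : ∀ f ω, sInf (Set.range f) ≤ M f ω) :
    LowerPrevCoherent fun f => P (M f) := by
  refine ⟨fun f => ?_, fun f l hl => ?_, fun f g => ?_⟩
  · exact (le_csInf (Set.range_nonempty _) (Set.forall_mem_range.2 (hM f))).trans (hP.1 _)
  · exact (congrArg P (M.map_smul l f)).trans (hP.map_smul hl (M f))
  · simpa only [map_add] using hP.2.2 (M f) (M g)

theorem comp {α : Type*} [Fintype α] [Nonempty α] (hP : LowerPrevCoherent P) (φ : Ω → α) :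
    LowerPrevCoherent fun h : α → ℝ => P fun ω => h (φ ω) :=
  hP.comp_linearMap (LinearMap.funLeft ℝ ℝ φ) fun h ω =>
    csInf_le (Set.finite_range h).bddBelow ⟨φ ω, rfl⟩

end LowerPrevCoherent

section NaturalExtension

variable {α β : Type*} [Fintype β]

noncomputable def naturalExtension (Q : (α → ℝ) → ℝ) (L : (α → ℝ) →ₗ[ℝ] β → ℝ) (h : β → ℝ) :
    ℝ :=
  sSup {r : ℝ | ∃ g : α → ℝ, (∀ b, L g b ≤ h b) ∧ r = Q g}

variable {Q : (α → ℝ) → ℝ} {L : (α → ℝ) →ₗ[ℝ] β → ℝ}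

theorem le_naturalExtension (hdom : ∀ g, ∃ b, Q g ≤ L g b) {g : α → ℝ} {h : β → ℝ}
    (hg : ∀ b, L g b ≤ h b) : Q g ≤ naturalExtension Q L h := by
  refine le_csSup ⟨sSup (Set.range h), ?_⟩ ⟨g, hg, rfl⟩
  rintro _ ⟨g', hg', rfl⟩
  obtain ⟨b, hb⟩ := hdom g'
  exact hb.trans ((hg' b).trans (le_csSup (Set.finite_range h).bddAbove ⟨b, rfl⟩))

theorem naturalExtension_le (hL : ∀ c, L (fun _ => c) = fun _ => c) {h : β → ℝ} {r : ℝ}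
    (hr : ∀ g, (∀ b, L g b ≤ h b) → Q g ≤ r) : naturalExtension Q L h ≤ r := by
  refine csSup_le ⟨_, fun _ => sInf (Set.range h), fun b => ?_, rfl⟩ ?_
  · rw [hL]
    exact csInf_le (Set.finite_range h).bddBelow ⟨b, rfl⟩
  · rintro _ ⟨g, hg, rfl⟩
    exact hr g hg

variable [Fintype α] [Nonempty α]

theorem mul_naturalExtension_le (hQ : LowerPrevCoherent Q) (hL : ∀ c, L (fun _ => c) = fun _ => c)
    (hdom : ∀ g, ∃ b, Q g ≤ L g b) {c : ℝ} (hc : 0 < c) (h : β → ℝ) :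
    c * naturalExtension Q L h ≤ naturalExtension Q L (c • h) := by
  rw [← le_div_iff₀' hc]
  refine naturalExtension_le hL fun g hg => ?_
  rw [le_div_iff₀' hc, ← hQ.map_smul hc.le]
  refine le_naturalExtension hdom fun b => ?_
  simpa using mul_le_mul_of_nonneg_left (hg b) hc.le

theorem lowerPrevCoherent_naturalExtension [Nonempty β] (hQ : LowerPrevCoherent Q)
    (hL : ∀ c, L (fun _ => c) = fun _ => c) (hdom : ∀ g, ∃ b, Q g ≤ L g b) :
    LowerPrevCoherent (naturalExtension Q L) := by
  refine ⟨fun h => ?_, fun h l hl => ?_, fun h₁ h₂ => ?_⟩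
  · refine (hQ.const_le _).trans (le_naturalExtension hdom fun b => ?_)
    rw [hL]
    exact csInf_le (Set.finite_range h).bddBelow ⟨b, rfl⟩
  · rcases hl.eq_or_lt with rfl | hl
    · refine le_antisymm (naturalExtension_le hL fun g hg => ?_) ?_
      · obtain ⟨b, hb⟩ := hdom g
        simpa using hb.trans (hg b)
      · simpa [hQ.map_zero] using le_naturalExtension (g := 0) (h := fun b => 0 * h b) hdom
          (by simp)
    refine le_antisymm ?_ (mul_naturalExtension_le hQ hL hdom hl h)
    have := mul_naturalExtension_le hQ hL hdom (inv_pos.2 hl) (l • h)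
    rwa [inv_smul_smul₀ hl.ne', inv_mul_le_iff₀ hl] at this
  · have key : ∀ g₁, (∀ b, L g₁ b ≤ h₁ b) →
        Q g₁ + naturalExtension Q L h₂ ≤ naturalExtension Q L (h₁ + h₂) := fun g₁ hg₁ => by
      rw [← le_sub_iff_add_le']
      refine naturalExtension_le hL fun g₂ hg₂ => le_sub_iff_add_le'.2 ?_
      refine (hQ.2.2 g₁ g₂).trans (le_naturalExtension hdom fun b => ?_)
      simpa using add_le_add (hg₁ b) (hg₂ b)
    rw [← le_sub_iff_add_le]
    exact naturalExtension_le hL fun g₁ hg₁ => le_sub_iff_add_le.2 (key g₁ hg₁)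

end NaturalExtension

theorem nu_pos {X : Type*} [Fintype X] {N : ℕ} (m : CVec X N) : 0 < nu m :=
  Nat.multinomial_pos _ _

section CountVectors

variable {X : Type*} [Fintype X] [DecidableEq X] {N : ℕ}

theorem card_fiber_eq_countMap (z : Fin N → X) (x : X) :
    Fintype.card {k // z k = x} = (countMap N z).1 x := by
  simp [Fintype.card_subtype, countMap]

theorem countMap_comp_perm (z : Fin N → X) (π : Equiv.Perm (Fin N)) :
    countMap N (fun k => z (π k)) = countMap N z :=
  Subtype.ext <| funext fun x => by
    simp only [countMap]
    exact card_equiv π (by simp)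

theorem countMap_surjective : Function.Surjective (countMap (X := X) N) := by
  intro m
  let e : Fin N ≃ Σ x, Fin (m.1 x) := Fintype.equivOfCardEq (by simp [m.2])
  refine ⟨fun k => (e k).1, Subtype.ext (funext fun x => ?_)⟩
  simp only [countMap, card_filter]
  rw [e.sum_comp (fun p => if p.1 = x then 1 else 0), Fintype.sum_sigma]
  simp [apply_ite]

theorem exists_perm_of_countMap_eq {y z : Fin N → X} (h : countMap N y = countMap N z) :
    ∃ π : Equiv.Perm (Fin N), ∀ k, z (π k) = y k := by
  have hcard (x : X) : Fintype.card {k // y k = x} = Fintype.card {k // z k = x} := by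
    rw [card_fiber_eq_countMap, card_fiber_eq_countMap, h]
  let F (x : X) : {k // y k = x} ≃ {k // z k = x} := Fintype.equivOfCardEq (hcard x)
  refine ⟨(Equiv.sigmaFiberEquiv y).symm.trans
    ((Equiv.sigmaCongrRight F).trans (Equiv.sigmaFiberEquiv z)), fun k => ?_⟩
  simpa [Equiv.sigmaFiberEquiv, Equiv.sigmaCongrRight] using (F (y k) ⟨k, rfl⟩).2

/-- The permutations carrying `z` to `y` form a coset of the stabiliser of `z`. -/
theorem card_perm_comp_eq {y z : Fin N → X} (h : countMap N y = countMap N z) :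
    #{π : Equiv.Perm (Fin N) | (fun k => z (π k)) = y} = ∏ x, ((countMap N z).1 x).factorial := by
  obtain ⟨π₀, hπ₀⟩ := exists_perm_of_countMap_eq h
  have hstab : #{σ : Equiv.Perm (Fin N) | z ∘ σ = z} = ∏ x, ((countMap N z).1 x).factorial := by
    rw [← Fintype.card_subtype, DomMulAct.stabilizer_card z]
    simp only [card_fiber_eq_countMap]
  rw [← hstab]
  refine card_bij' (fun π _ => π * π₀⁻¹) (fun σ _ => σ * π₀) (fun π hπ => ?_) (fun σ hσ => ?_)
    (fun π _ => by group) (fun σ _ => by group)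
  · simp only [mem_filter_univ] at hπ ⊢
    funext k
    simpa [← hπ] using (hπ₀ (π₀⁻¹ k)).symm
  · simp only [mem_filter_univ] at hσ ⊢
    funext k
    simpa [hπ₀] using congrFun hσ (π₀ k)

theorem sum_perm_comp {M : Type*} [AddCommMonoid M] (z : Fin N → X) (f : (Fin N → X) → M) :
    ∑ π : Equiv.Perm (Fin N), f (fun k => z (π k))
      = (∏ x, ((countMap N z).1 x).factorial) • ∑ y with countMap N y = countMap N z, f y := by
  rw [smul_sum, ← sum_fiberwise_of_maps_to (g := fun (π : Equiv.Perm (Fin N)) k => z (π k))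
    (t := {y | countMap N y = countMap N z})
    (fun π _ => (mem_filter_univ _).2 (countMap_comp_perm z π))]
  refine sum_congr rfl fun y hy => ?_
  rw [sum_congr rfl fun π hπ => by rw [(mem_filter.1 hπ).2], sum_const,
    card_perm_comp_eq (mem_filter.1 hy).2]

theorem card_filter_countMap_eq (m : CVec X N) : #{z | countMap N z = m} = nu m := by
  obtain ⟨z, rfl⟩ := countMap_surjective m
  have hperm := sum_perm_comp z fun _ => 1
  have hspec := Nat.multinomial_spec univ (countMap N z).1
  simp only [sum_const, card_univ, Fintype.card_perm, Fintype.card_fin, smul_eq_mul,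
    mul_one] at hperm
  rw [(countMap N z).2, hperm] at hspec
  exact Nat.eq_of_mul_eq_mul_left (prod_pos fun x _ => Nat.factorial_pos _) hspec.symm

end CountVectors

section MultipleHypergeometric

variable {X : Type*} [Fintype X] [DecidableEq X] {N : ℕ}

variable (X N) in
noncomputable def muHyLinear : ((Fin N → X) → ℝ) →ₗ[ℝ] CVec X N → ℝ where
  toFun := MuHy
  map_add' f g := funext fun m => by simp only [MuHy, Pi.add_apply, sum_add_distrib, add_div]
  map_smul' c f := funext fun m => by
    simp only [MuHy, Pi.smul_apply, smul_eq_mul, ← mul_sum, mul_div_assoc, RingHom.id_apply]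

theorem muHy_comp_countMap (h : CVec X N → ℝ) (m : CVec X N) :
    MuHy (fun z => h (countMap N z)) m = h m := by
  rw [MuHy, sum_congr rfl fun z hz => by rw [(mem_filter.1 hz).2], sum_const,
    card_filter_countMap_eq, nsmul_eq_mul, mul_div_cancel_left₀]
  exact Nat.cast_ne_zero.2 (nu_pos m).ne'

theorem sInf_range_le_muHy (f : (Fin N → X) → ℝ) (m : CVec X N) :
    sInf (Set.range f) ≤ MuHy f m := by
  rw [MuHy, le_div_iff₀ (by exact_mod_cast nu_pos m), mul_comm, ← card_filter_countMap_eq,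
    ← nsmul_eq_mul]
  exact card_nsmul_le_sum _ f _ fun z _ => csInf_le (Set.finite_range f).bddBelow ⟨z, rfl⟩

theorem muHy_sub_comp_perm (f : (Fin N → X) → ℝ) (π : Equiv.Perm (Fin N)) (m : CVec X N) :
    MuHy (fun z => f (fun k => z (π k)) - f z) m = 0 := by
  rw [MuHy, sum_sub_distrib, sum_filter, sum_filter, sub_eq_zero.2, zero_div]
  refine Fintype.sum_equiv (π.symm.arrowCongr (Equiv.refl X)) _ _ fun z => ?_
  change _ = if countMap N (fun k => z (π k)) = m then f (fun k => z (π k)) else 0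
  rw [countMap_comp_perm]

theorem muHy_countMap_eq_average (f : (Fin N → X) → ℝ) (z : Fin N → X) :
    MuHy f (countMap N z) = (N.factorial : ℝ)⁻¹ * ∑ π : Equiv.Perm (Fin N), f fun k => z (π k) := by
  have hspec :
      ((∏ x, ((countMap N z).1 x).factorial : ℕ) : ℝ) * nu (countMap N z) = N.factorial := by
    exact_mod_cast (countMap N z).2 ▸ Nat.multinomial_spec univ (countMap N z).1
  have hprod : ((∏ x, ((countMap N z).1 x).factorial : ℕ) : ℝ) ≠ 0 :=
    Nat.cast_ne_zero.2 (prod_pos fun x _ => Nat.factorial_pos _).ne'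
  rw [sum_perm_comp, nsmul_eq_mul, MuHy, ← hspec]
  field_simp

end MultipleHypergeometric

section CylindricalExtension

theorem cylExt_append {X : Type*} {n k : ℕ} (f : (Fin n → X) → ℝ) (z₁ : Fin n → X)
    (z₂ : Fin k → X) : cylExt f (Fin.append z₁ z₂) = f z₁ := by
  simp only [cylExt]
  exact congrArg f (funext fun i => Fin.append_left z₁ z₂ i)

variable {X : Type*} [Fintype X] [DecidableEq X] {n k : ℕ}

theorem countMap_append (z₁ : Fin n → X) (z₂ : Fin k → X) (x : X) :
    (countMap (n + k) (Fin.append z₁ z₂)).1 x = (countMap n z₁).1 x + (countMap k z₂).1 x := by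
  simp only [countMap, card_filter, Fin.sum_univ_add, Fin.append_left, Fin.append_right]

theorem card_filter_countMap_append_eq (z₁ : Fin n → X) (μ : CVec X (n + k)) :
    #{z₂ : Fin k → X | countMap (n + k) (Fin.append z₁ z₂) = μ} = nuSub μ (countMap n z₁) := by
  set m := countMap n z₁
  simp only [Subtype.ext_iff, funext_iff, countMap_append]
  by_cases hle : ∀ x, m.1 x ≤ μ.1 x
  · have hsum : ∑ x, (μ.1 x - m.1 x) = k := by
      have := μ.2
      have := m.2
      rw [sum_tsub_distrib _ fun x _ => hle x]
      omega
    have hiff (z₂ : Fin k → X) : (∀ x, m.1 x + (countMap k z₂).1 x = μ.1 x) ↔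
        countMap k z₂ = ⟨fun x => μ.1 x - m.1 x, hsum⟩ := by
      simp only [Subtype.ext_iff, funext_iff]
      exact forall_congr' fun x => by have := hle x; omega
    rw [filter_congr fun z₂ _ => hiff z₂, card_filter_countMap_eq, nuSub, if_pos hle, nu]
  · rw [nuSub, if_neg hle, card_eq_zero, filter_eq_empty_iff]
    exact fun z₂ _ h => hle fun x => h x ▸ Nat.le_add_right _ _

theorem sum_filter_countMap_cylExt (f : (Fin n → X) → ℝ) (μ : CVec X (n + k)) :
    ∑ z with countMap (n + k) z = μ, cylExt f z
      = ∑ z₁, (nuSub μ (countMap n z₁) : ℝ) * f z₁ := by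
  rw [sum_filter, ← (Fin.appendEquiv n k).sum_comp, Fintype.sum_prod_type]
  refine sum_congr rfl fun z₁ _ => ?_
  simp only [Fin.appendEquiv, Equiv.coe_fn_mk, cylExt_append]
  rw [← sum_filter, sum_const, nsmul_eq_mul, card_filter_countMap_append_eq]

theorem muHy_cylExt (f : (Fin n → X) → ℝ) (μ : CVec X (n + k)) :
    MuHy (cylExt f) μ = gbar (MuHy f) μ := by
  rw [MuHy, sum_filter_countMap_cylExt, gbar, ← sum_fiberwise univ (countMap n), sum_div]
  refine sum_congr rfl fun m _ => ?_
  rw [sum_congr rfl fun z hz => by rw [(mem_filter.1 hz).2], ← mul_sum, MuHy]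
  have : (nu m : ℝ) ≠ 0 := Nat.cast_ne_zero.2 (nu_pos m).ne'
  field_simp

/-- The identity `∑ₘ ν(m) ν(μ - m) / ν(μ) = 1`, read off from the hypergeometric expectation of a
constant gamble. -/
theorem gbar_const (c : ℝ) (μ : CVec X (n + k)) : gbar (fun _ => c) μ = c := by
  have hconst (N : ℕ) : MuHy (fun _ : Fin N → X => c) = fun _ => c :=
    funext (muHy_comp_countMap fun _ => c)
  have hcyl : cylExt (k := k) (fun _ : Fin n → X => c) = fun _ => c := rfl
  simpa only [hcyl, hconst] using (muHy_cylExt (k := k) (fun _ => c) μ).symm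

variable (X n k) in
noncomputable def gbarLinear : (CVec X n → ℝ) →ₗ[ℝ] CVec X (n + k) → ℝ where
  toFun := gbar
  map_add' g₁ g₂ := funext fun μ => by simp only [gbar, Pi.add_apply, mul_add, sum_add_distrib]
  map_smul' c g := funext fun μ => by
    simp only [gbar, Pi.smul_apply, smul_eq_mul, mul_sum, RingHom.id_apply]
    exact sum_congr rfl fun m _ => by ring

end CylindricalExtension

section Exchangeability

variable {X : Type*} {N : ℕ} {P : ((Fin N → X) → ℝ) → ℝ}

theorem Exchangeable.nonneg_sub_comp_perm (hx : Exchangeable P) (f : (Fin N → X) → ℝ)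
    (π : Equiv.Perm (Fin N)) : 0 ≤ P fun z => f z - f fun k => z (π k) := by
  simpa using hx (fun z => f fun k => z (π k)) π⁻¹

theorem Exchangeable.apply_muHy_countMap [Fintype X] [DecidableEq X] [Nonempty X]
    (hx : Exchangeable P) (hP : LowerPrevCoherent P) (f : (Fin N → X) → ℝ) :
    P (fun z => MuHy f (countMap N z)) = P f := by
  have hc : (0 : ℝ) ≤ (N.factorial : ℝ)⁻¹ := by positivity
  have hf (z : Fin N → X) : f z = (N.factorial : ℝ)⁻¹ * ∑ _π : Equiv.Perm (Fin N), f z := by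
    rw [sum_const, card_univ, Fintype.card_perm, Fintype.card_fin, nsmul_eq_mul,
      inv_mul_cancel_left₀ (by positivity)]
  apply le_antisymm
  · refine hP.le_of_nonneg_sub ?_
    convert hP.nonneg_smul_sum hc univ fun π _ => hx.nonneg_sub_comp_perm f π using 2
    funext z
    rw [Pi.sub_apply, Pi.smul_apply, Finset.sum_apply, smul_eq_mul, sum_sub_distrib, mul_sub,
      ← muHy_countMap_eq_average, ← hf]
  · refine hP.le_of_nonneg_sub ?_
    convert hP.nonneg_smul_sum hc univ fun π _ => hx f π using 2
    funext z
    rw [Pi.sub_apply, Pi.smul_apply, Finset.sum_apply, smul_eq_mul, sum_sub_distrib, mul_sub,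
      ← muHy_countMap_eq_average, ← hf]

end Exchangeability

theorem stmt18_general {X : Type*} [Fintype X] [DecidableEq X] [Nonempty X] {n k : ℕ}
    (P : ((Fin n → X) → ℝ) → ℝ)
    (hP : LowerPrevCoherent P) (hex : Exchangeable P)
    (Q : (CVec X n → ℝ) → ℝ)
    (hQ : ∀ h : CVec X n → ℝ, Q h = P (fun z => h (countMap n z)))
    (hdom : ∀ g : CVec X n → ℝ, ∃ μ : CVec X (n + k), Q g ≤ gbar g μ)
    (E : (CVec X (n + k) → ℝ) → ℝ)
    (hE : ∀ h : CVec X (n + k) → ℝ,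
      E h = sSup {r : ℝ | ∃ g : CVec X n → ℝ, (∀ μ : CVec X (n + k), gbar g μ ≤ h μ) ∧ r = Q g})
    (F : ((Fin (n + k) → X) → ℝ) → ℝ)
    (hF : ∀ f : (Fin (n + k) → X) → ℝ, F f = E (fun μ => MuHy f μ)) :
    LowerPrevCoherent F ∧ Exchangeable F ∧
      (∀ h : CVec X (n + k) → ℝ, F (fun z => h (countMap (n + k) z)) = E h) ∧
      (∀ f : (Fin n → X) → ℝ, P f ≤ F (cylExt f)) ∧
      ∀ E' : ((Fin (n + k) → X) → ℝ) → ℝ, LowerPrevCoherent E' → Exchangeable E' →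
        (∀ f : (Fin n → X) → ℝ, P f ≤ E' (cylExt f)) → ∀ f, F f ≤ E' f := by
  obtain rfl : F = fun f => E (muHyLinear X (n + k) f) := funext hF
  obtain rfl : E = naturalExtension Q (gbarLinear X n k) := funext hE
  obtain rfl : Q = fun h => P fun z => h (countMap n z) := funext hQ
  have hL (c : ℝ) : gbarLinear X n k (fun _ => c) = fun _ => c := funext (gbar_const c)
  have hEc := lowerPrevCoherent_naturalExtension (hP.comp (countMap n)) hL hdom
  refine ⟨hEc.comp_linearMap _ sInf_range_le_muHy, fun f π => ?_, fun h => ?_, fun f => ?_,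
    fun E' hE' hxE' hdomE' f => naturalExtension_le hL fun g hg => ?_⟩
  · exact (congrArg _ (funext (muHy_sub_comp_perm f π))).trans hEc.map_zero |>.ge
  · exact congrArg _ (funext (muHy_comp_countMap h))
  · calc P f = P fun z => MuHy f (countMap n z) := (hex.apply_muHy_countMap hP f).symm
      _ ≤ naturalExtension _ (gbarLinear X n k) (gbar (MuHy f)) :=
        le_naturalExtension (L := gbarLinear X n k) hdom fun μ => le_rfl
      _ = _ := congrArg _ (funext fun μ => (muHy_cylExt f μ).symm)
  · have hcyl : MuHy (cylExt (k := k) fun z => g (countMap n z)) = gbar g := by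
      rw [funext (muHy_cylExt _), funext (muHy_comp_countMap g)]
    calc P (fun z => g (countMap n z)) ≤ E' (cylExt fun z => g (countMap n z)) := hdomE' _
      _ = E' fun z => gbar g (countMap (n + k) z) := by
        rw [← hxE'.apply_muHy_countMap hE', hcyl]
      _ ≤ E' fun z => MuHy f (countMap (n + k) z) := hE'.mono fun z => hg _
      _ = E' f := hxE'.apply_muHy_countMap hE' f

/-- when the extendability condition holds, the point-wise smallest coherent
exchangeable extension to `n+k` variables has count distribution
`E(h) = sup{Q^n(g) : ḡ ≤ h}`, i.e. it is `f ↦ E(MuHy^{n+k}(f|·))`. -/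
theorem stmt18 {X : Type*} [Fintype X] [DecidableEq X] [Nonempty X] {n k : ℕ} (hn : 1 ≤ n)
    (P : ((Fin n → X) → ℝ) → ℝ)
    (hP : LowerPrevCoherent P) (hex : Exchangeable P)
    (Q : (CVec X n → ℝ) → ℝ)
    (hQ : ∀ h : CVec X n → ℝ, Q h = P (fun z => h (countMap n z)))
    (hdom : ∀ g : CVec X n → ℝ, ∃ μ : CVec X (n + k), Q g ≤ gbar g μ)
    (E : (CVec X (n + k) → ℝ) → ℝ)
    (hE : ∀ h : CVec X (n + k) → ℝ,
      E h = sSup {r : ℝ | ∃ g : CVec X n → ℝ, (∀ μ : CVec X (n + k), gbar g μ ≤ h μ) ∧ r = Q g})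
    (F : ((Fin (n + k) → X) → ℝ) → ℝ)
    (hF : ∀ f : (Fin (n + k) → X) → ℝ, F f = E (fun μ => MuHy f μ)) :
    LowerPrevCoherent F ∧ Exchangeable F ∧
      (∀ h : CVec X (n + k) → ℝ, F (fun z => h (countMap (n + k) z)) = E h) ∧
      (∀ f : (Fin n → X) → ℝ, P f ≤ F (cylExt f)) ∧
      ∀ E' : ((Fin (n + k) → X) → ℝ) → ℝ, LowerPrevCoherent E' → Exchangeable E' →
        (∀ f : (Fin n → X) → ℝ, P f ≤ E' (cylExt f)) → ∀ f, F f ≤ E' f :=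
  stmt18_general P hP hex Q hQ hdom E hE F hF
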